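/- Let I ⊂ {1,…,n} and for each i ∈ I let r̲_i, r̄_i : l∞^{n−1} → ℝ be 1-Lipschitz maps. Define Q := { x ∈ l∞^n : for all i ∈ I, r̲_i(π̂_i(x)) ≤ x_i ≤ r̄_i(π̂_i(x)) }. If Q ≠ ∅ and r̲_i ≤ r̄_i pointwise for every i ∈ I, then Q is injective. -/

import Mathlib

/-!
A hyperconvex space (every family of pairwise intersecting closed balls has a common point) is
injective, by the Aronszajn–Panitchpakdi argument: extend a `1`-Lipschitz map one point at a time
and conclude with Zorn's lemma.

So it suffices to intersect balls `B(xₐ, rₐ)` centred in `Q`. In `l∞` their intersection is a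
box. On this box, clamp each constrained coordinate `zᵢ` into
`[max(aᵢ, r̲ᵢ(π̂ᵢ z)), min(bᵢ, r̄ᵢ(π̂ᵢ z))]`. The interval is nonempty because the `r̲ᵢ, r̄ᵢ` are
`1`-Lipschitz and the centres lie in `Q`. Clamping gives a `1`-Lipschitz self-map of the compact
convex box. Such a map has a fixed point, since its contractions towards a point have fixed points
that are approximate fixed points of the map itself. That fixed point is a common point of the
balls lying in `Q`.
-/

open Set Metric

def IsInjectiveMetricSpace (X : Type) [MetricSpace X] : Prop :=
  ∀ (A B : Type) [MetricSpace A] [MetricSpace B], ∀ (i : A → B) (f : A → X),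
    Isometry i → LipschitzWith 1 f →
      ∃ g : B → X, LipschitzWith 1 g ∧ ∀ a, g (i a) = f a

/-- A subset of `l∞ⁿ = (Fin n → ℝ)` (whose product metric is the sup-metric) is injective
if it is an injective metric space with the induced metric. -/
def IsInjectiveSubset {n : ℕ} (S : Set (Fin n → ℝ)) : Prop :=
  IsInjectiveMetricSpace S

/-- The `1`-Lipschitz map `π̂ᵢ : l∞^{n+1} → l∞ⁿ` deleting the `i`-th coordinate. -/
def deleteCoord {n : ℕ} (i : Fin (n + 1)) (x : Fin (n + 1) → ℝ) : Fin n → ℝ :=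
  fun j => x (i.succAbove j)

open Filter Topology Function

section FixedPoint

variable {E : Type*} [NormedAddCommGroup E] [NormedSpace ℝ E] {K : Set E} {F : E → E}

theorem exists_dist_self_le_of_lipschitzOnWith_one (hKc : IsCompact K) (hKv : Convex ℝ K)
    (hF : LipschitzOnWith 1 F K) (hFK : MapsTo F K K) {x₀ : E} (hx₀ : x₀ ∈ K) {ε : ℝ}
    (hε₀ : 0 < ε) (hε₁ : ε ≤ 1) : ∃ w ∈ K, dist w (F w) ≤ ε * diam K := by
  -- Shrinking `F` towards `x₀` by the factor `1 - ε` gives a contraction of `K`.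
  set G : E → E := fun z => AffineMap.homothety x₀ (1 - ε) (F z)
  have hGK : MapsTo G K K := fun z hz => by
    simpa only [G, AffineMap.homothety_eq_lineMap] using
      hKv.lineMap_mem hx₀ (hFK hz) ⟨by linarith, by linarith⟩
  have hG : ContractingWith (1 - ε).toNNReal (hGK.restrict G K K) := by
    refine ⟨Real.toNNReal_lt_one.2 (by linarith), hGK.lipschitzOnWith_iff_restrict.1 ?_⟩
    refine LipschitzOnWith.of_dist_le_mul fun z hz w hw => ?_
    simp only [G, AffineMap.homothety_apply, vsub_eq_sub, vadd_eq_add, dist_add_right,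
      dist_smul₀, dist_sub_right, Real.norm_of_nonneg (sub_nonneg.2 hε₁),
      Real.coe_toNNReal _ (sub_nonneg.2 hε₁)]
    exact mul_le_mul_of_nonneg_left (by simpa using hF.dist_le_mul z hz w hw)
      (sub_nonneg.2 hε₁)
  obtain ⟨w, hwK, hwG, -⟩ := hG.exists_fixedPoint' hKc.isComplete hGK hx₀ (edist_ne_top _ _)
  refine ⟨w, hwK, ?_⟩
  calc dist w (F w) = dist (G w) (F w) := by rw [hwG]
    _ = ε * dist x₀ (F w) := by simp [G, abs_of_pos hε₀]
    _ ≤ ε * diam K := by gcongr; exact dist_le_diam_of_mem hKc.isBounded hx₀ (hFK hwK)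

theorem exists_fixedPoint_of_lipschitzOnWith_one (hKc : IsCompact K) (hKv : Convex ℝ K)
    (hKne : K.Nonempty) (hF : LipschitzOnWith 1 F K) (hFK : MapsTo F K K) :
    ∃ z ∈ K, IsFixedPt F z := by
  have hcont : ContinuousOn (fun z => dist z (F z)) K := by
    have := hF.continuousOn
    fun_prop
  obtain ⟨z, hzK, hz⟩ := hKc.exists_isMinOn hKne hcont
  obtain ⟨x₀, hx₀⟩ := hKne
  have hzε : ∀ ε ∈ Ioc (0 : ℝ) 1, dist z (F z) ≤ ε * diam K := fun ε hε => by
    obtain ⟨w, hwK, hw⟩ :=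
      exists_dist_self_le_of_lipschitzOnWith_one hKc hKv hF hFK hx₀ hε.1 hε.2
    exact (hz hwK).trans hw
  have hlim : Tendsto (fun ε : ℝ => ε * diam K) (𝓝[>] 0) (𝓝 0) :=
    ((continuous_mul_const (diam K)).tendsto' 0 0 (zero_mul _)).mono_left nhdsWithin_le_nhds
  refine ⟨z, hzK, dist_le_zero.1 (ge_of_tendsto hlim ?_) |>.symm⟩
  filter_upwards [Ioc_mem_nhdsGT zero_lt_one] with ε hε using hzε ε hε

end FixedPoint

theorem LipschitzWith.pi {α ι : Type*} [PseudoEMetricSpace α] [Fintype ι] {β : ι → Type*}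
    [∀ i, PseudoEMetricSpace (β i)] {K : NNReal} {f : α → ∀ i, β i}
    (hf : ∀ i, LipschitzWith K fun x => f x i) : LipschitzWith K f :=
  fun x y => edist_pi_le_iff.2 fun i => hf i x y

theorem exists_mem_Icc_forall_le_le {ι : Type*} [Fintype ι] {a b : ι → ℝ} (hab : a ≤ b)
    (I : Set ι) {lo hi : ι → (ι → ℝ) → ℝ} (hlo : ∀ i ∈ I, LipschitzWith 1 (lo i))
    (hhi : ∀ i ∈ I, LipschitzWith 1 (hi i))
    (hle : ∀ i ∈ I, ∀ z ∈ Icc a b, max (a i) (lo i z) ≤ min (b i) (hi i z)) :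
    ∃ z ∈ Icc a b, ∀ i ∈ I, lo i z ≤ z i ∧ z i ≤ hi i z := by
  classical
  set L : ι → (ι → ℝ) → ℝ := fun i z => max (a i) (lo i z)
  set U : ι → (ι → ℝ) → ℝ := fun i z => min (b i) (hi i z)
  -- A fixed point of this clamping map is a solution.
  set F : (ι → ℝ) → ι → ℝ := fun z i => if i ∈ I then max (L i z) (min (U i z) (z i)) else z i
  have hF : LipschitzWith 1 F := LipschitzWith.pi fun i => by
    by_cases hiI : i ∈ I
    · simpa [F, hiI] using
        ((hlo i hiI).const_max (a i)).max (((hhi i hiI).const_min (b i)).min (LipschitzWith.eval i))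
    · simpa [F, hiI] using LipschitzWith.eval (α := fun _ : ι => ℝ) i
  have hFL : ∀ z, ∀ i ∈ I, L i z ≤ F z i := fun z i hiI => by
    simp only [F, if_pos hiI, le_max_left]
  have hFU : ∀ z ∈ Icc a b, ∀ i ∈ I, F z i ≤ U i z := fun z hz i hiI => by
    simp only [F, if_pos hiI]
    exact max_le (hle i hiI z hz) (min_le_left _ _)
  have hFmaps : MapsTo F (Icc a b) (Icc a b) := by
    intro z hz
    refine ⟨fun i => ?_, fun i => ?_⟩ <;> by_cases hiI : i ∈ I
    · exact (le_max_left _ _).trans (hFL z i hiI)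
    · simpa [F, hiI] using hz.1 i
    · exact (hFU z hz i hiI).trans (min_le_left _ _)
    · simpa [F, hiI] using hz.2 i
  obtain ⟨z, hz, hFz⟩ := exists_fixedPoint_of_lipschitzOnWith_one isCompact_Icc (convex_Icc a b)
    (nonempty_Icc.2 hab) hF.lipschitzOnWith hFmaps
  refine ⟨z, hz, fun i hiI => ⟨?_, ?_⟩⟩
  · exact (le_max_right _ _).trans ((hFL z i hiI).trans_eq (congrFun hFz i))
  · exact ((congrFun hFz i).symm.trans_le (hFU z hz i hiI)).trans (min_le_right _ _)

section BallIntersection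

variable {ι κ : Type*} [Fintype ι] {x : κ → ι → ℝ} {r : κ → ℝ}

theorem sub_le_add_of_forall_dist_le_add (h : ∀ α β, dist (x α) (x β) ≤ r α + r β)
    (α β : κ) (i : ι) : x α i - r α ≤ x β i + r β := by
  have := abs_sub_le_iff.1 ((dist_le_pi_dist (x α) (x β) i).trans (h α β))
  linarith [this.1]

variable [Nonempty κ]

theorem bddAbove_range_sub (h : ∀ α β, dist (x α) (x β) ≤ r α + r β) (i : ι) :
    BddAbove (range fun α => x α i - r α) :=
  let β := Classical.arbitrary κ
  ⟨x β i + r β, forall_mem_range.2 fun α => sub_le_add_of_forall_dist_le_add h α β i⟩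

theorem bddBelow_range_add (h : ∀ α β, dist (x α) (x β) ≤ r α + r β) (i : ι) :
    BddBelow (range fun α => x α i + r α) :=
  let β := Classical.arbitrary κ
  ⟨x β i - r β, forall_mem_range.2 fun α => sub_le_add_of_forall_dist_le_add h β α i⟩

theorem iSup_sub_le_iInf_add (h : ∀ α β, dist (x α) (x β) ≤ r α + r β) :
    (fun i => ⨆ α, (x α i - r α)) ≤ fun i => ⨅ α, (x α i + r α) := fun i =>
  ciSup_le fun α => le_ciInf fun β => sub_le_add_of_forall_dist_le_add h α β i

theorem Icc_iSup_sub_iInf_add_subset_closedBall (h : ∀ α β, dist (x α) (x β) ≤ r α + r β)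
    (α : κ) :
    Icc (fun i => ⨆ α, (x α i - r α)) (fun i => ⨅ α, (x α i + r α)) ⊆ closedBall (x α) (r α) := by
  intro z hz
  have hr : 0 ≤ r α := by linarith [dist_self (x α) ▸ h α α]
  refine mem_closedBall.2 ((dist_pi_le_iff hr).2 fun i => abs_sub_le_iff.2 ⟨?_, ?_⟩)
  · linarith [hz.2 i, ciInf_le (bddBelow_range_add h i) α]
  · linarith [hz.1 i, le_ciSup (bddAbove_range_sub h i) α]

end BallIntersection

def IsHyperconvex (X : Type*) [PseudoMetricSpace X] : Prop :=
  ∀ (κ : Type) (x : κ → X) (r : κ → ℝ), (∀ α β, dist (x α) (x β) ≤ r α + r β) →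
    ∃ z, ∀ α, dist z (x α) ≤ r α

section ShortGraph

variable {B X : Type*} [PseudoMetricSpace B] [PseudoMetricSpace X]

-- Partial `1`-Lipschitz maps `B → X`, encoded by their graphs.
def IsShortGraph (Γ : Set (B × X)) : Prop :=
  ∀ p ∈ Γ, ∀ q ∈ Γ, dist p.2 q.2 ≤ dist p.1 q.1

theorem IsShortGraph.sUnion {c : Set (Set (B × X))} (hc : IsChain (· ⊆ ·) c)
    (h : ∀ Γ ∈ c, IsShortGraph Γ) : IsShortGraph (⋃₀ c) := by
  rintro p ⟨Γ, hΓ, hp⟩ q ⟨Δ, hΔ, hq⟩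
  rcases eq_or_ne Γ Δ with rfl | hne
  · exact h Γ hΓ p hp q hq
  rcases hc hΓ hΔ hne with hsub | hsub
  exacts [h Δ hΔ p (hsub hp) q hq, h Γ hΓ p hp q (hsub hq)]

end ShortGraph

theorem IsHyperconvex.exists_isShortGraph_insert {B X : Type} [PseudoMetricSpace B]
    [PseudoMetricSpace X] (hX : IsHyperconvex X) {Γ : Set (B × X)} (hΓ : IsShortGraph Γ)
    (b : B) : ∃ z, IsShortGraph (insert (b, z) Γ) := by
  obtain ⟨z, hz⟩ := hX Γ (fun p => p.1.2) (fun p => dist b p.1.1) fun p q =>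
    (hΓ p p.2 q q.2).trans (dist_triangle_left _ _ b)
  refine ⟨z, ?_⟩
  rintro p (rfl | hp) q (rfl | hq)
  · simp
  · exact hz ⟨q, hq⟩
  · simpa [dist_comm] using hz ⟨p, hp⟩
  · exact hΓ p hp q hq

theorem IsHyperconvex.isInjectiveMetricSpace {X : Type} [MetricSpace X] (hX : IsHyperconvex X) :
    IsInjectiveMetricSpace X := by
  intro A B _ _ i f hi hf
  set Γ₀ : Set (B × X) := range fun a => (i a, f a)
  set S : Set (Set (B × X)) := {Γ | Γ₀ ⊆ Γ ∧ IsShortGraph Γ}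
  have hΓ₀ : Γ₀ ∈ S := by
    refine ⟨subset_rfl, ?_⟩
    rintro _ ⟨a, rfl⟩ _ ⟨a', rfl⟩
    simpa [hi.dist_eq] using hf.dist_le_mul a a'
  obtain ⟨Γ, -, hΓ⟩ := zorn_subset_nonempty S (fun c hcS hc ⟨Δ, hΔ⟩ =>
    ⟨⋃₀ c, ⟨(hcS hΔ).1.trans (subset_sUnion_of_mem hΔ), .sUnion hc fun Γ h => (hcS h).2⟩,
      fun _ => subset_sUnion_of_mem⟩) Γ₀ hΓ₀
  have htotal : ∀ b, ∃ z, (b, z) ∈ Γ := fun b => by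
    obtain ⟨z, hz⟩ := hX.exists_isShortGraph_insert hΓ.prop.2 b
    exact ⟨z, hΓ.mem_of_prop_insert ⟨hΓ.prop.1.trans (subset_insert _ _), hz⟩⟩
  choose g hg using htotal
  refine ⟨g, LipschitzWith.of_dist_le_mul fun b b' => by simpa using hΓ.prop.2 _ (hg b) _ (hg b'),
    fun a => dist_le_zero.1 ?_⟩
  simpa using hΓ.prop.2 _ (hg (i a)) _ (hΓ.prop.1 ⟨a, rfl⟩)

def sandwichSet {ι : Type*} (I : Set ι) (lo hi : ι → (ι → ℝ) → ℝ) : Set (ι → ℝ) :=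
  {x | ∀ i ∈ I, lo i x ≤ x i ∧ x i ≤ hi i x}

theorem isHyperconvex_sandwichSet {ι : Type*} [Fintype ι] (I : Set ι)
    {lo hi : ι → (ι → ℝ) → ℝ} (hlo : ∀ i ∈ I, LipschitzWith 1 (lo i))
    (hhi : ∀ i ∈ I, LipschitzWith 1 (hi i)) (hle : ∀ i ∈ I, ∀ x, lo i x ≤ hi i x)
    (hne : (sandwichSet I lo hi).Nonempty) : IsHyperconvex (sandwichSet I lo hi) := by
  intro κ x r hr
  rcases isEmpty_or_nonempty κ with hκ | hκ
  · exact ⟨⟨_, hne.some_mem⟩, isEmptyElim⟩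
  set a : ι → ℝ := fun i => ⨆ α, ((x α).1 i - r α)
  set b : ι → ℝ := fun i => ⨅ α, ((x α).1 i + r α)
  have hab : a ≤ b := iSup_sub_le_iInf_add (x := fun α => (x α).1) hr
  have hball : ∀ α, Icc a b ⊆ closedBall (x α).1 (r α) :=
    Icc_iSup_sub_iInf_add_subset_closedBall (x := fun α => (x α).1) hr
  have hlob : ∀ i ∈ I, ∀ z ∈ Icc a b, lo i z ≤ b i := fun i hiI z hz => le_ciInf fun α =>
    calc lo i z ≤ lo i (x α) + dist z (x α) := by simpa using (hlo i hiI).le_add_mul z (x α)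
      _ ≤ (x α).1 i + r α := add_le_add ((x α).2 i hiI).1 (hball α hz)
  have hahi : ∀ i ∈ I, ∀ z ∈ Icc a b, a i ≤ hi i z := fun i hiI z hz => ciSup_le fun α =>
    calc (x α).1 i - r α ≤ hi i (x α) - dist z (x α) := sub_le_sub ((x α).2 i hiI).2 (hball α hz)
      _ ≤ hi i z := by
        have := (hhi i hiI).le_add_mul (x α) z
        rw [dist_comm] at this
        simp only [NNReal.coe_one, one_mul] at this
        linarith
  obtain ⟨z, hz, hzS⟩ := exists_mem_Icc_forall_le_le hab I hlo hhi fun i hiI z hz =>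
    max_le (le_min (hab i) (hahi i hiI z hz)) (le_min (hlob i hiI z hz) (hle i hiI z))
  exact ⟨⟨z, hzS⟩, fun α => hball α hz⟩

theorem lipschitzWith_deleteCoord {n : ℕ} (i : Fin (n + 1)) : LipschitzWith 1 (deleteCoord i) :=
  LipschitzWith.pi fun _ => LipschitzWith.eval _

/-- If `Q = {x ∈ l∞^{n+1} : ∀ i ∈ I, r̲ᵢ(π̂ᵢ x) ≤ xᵢ ≤ r̄ᵢ(π̂ᵢ x)}` is nonempty, where the
`r̲ᵢ, r̄ᵢ : l∞ⁿ → ℝ` are `1`-Lipschitz and `r̲ᵢ ≤ r̄ᵢ` pointwise, then `Q` is injective. -/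
theorem sandwich_injective {n : ℕ} (I : Set (Fin (n + 1)))
    (rlo rhi : Fin (n + 1) → (Fin n → ℝ) → ℝ)
    (hlo : ∀ i ∈ I, LipschitzWith 1 (rlo i)) (hhi : ∀ i ∈ I, LipschitzWith 1 (rhi i))
    (hle : ∀ i ∈ I, ∀ y, rlo i y ≤ rhi i y)
    (Q : Set (Fin (n + 1) → ℝ))
    (hQ : Q = {x | ∀ i ∈ I, rlo i (deleteCoord i x) ≤ x i ∧ x i ≤ rhi i (deleteCoord i x)})
    (hne : Q.Nonempty) :
    IsInjectiveSubset Q := by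
  subst hQ
  have hlo' : ∀ i ∈ I, LipschitzWith 1 fun x => rlo i (deleteCoord i x) := fun i hiI => by
    simpa [comp_def] using (hlo i hiI).comp (lipschitzWith_deleteCoord i)
  have hhi' : ∀ i ∈ I, LipschitzWith 1 fun x => rhi i (deleteCoord i x) := fun i hiI => by
    simpa [comp_def] using (hhi i hiI).comp (lipschitzWith_deleteCoord i)
  exact IsHyperconvex.isInjectiveMetricSpace <|
    isHyperconvex_sandwichSet I hlo' hhi' (fun i hiI _ => hle i hiI _) hne
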